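/- arXiv:1511.05864 — 5 statements merged into one kernel-verified Lean document; each statement's English description precedes it below -/
import Mathlib

section
/- Assume λ_1 > λ_2 > … > λ_p > 0 and y_1 ≥ y_2 ≥ … ≥ y_p ≥ 0, and let w* be a solution of the linear program: minimize Σ_{i=1}^p λ_i w_i subject to Σ_{i=1}^k (y_i − λ_i) ≤ Σ_{i=1}^k w_i for k = 1,…,p and w_1 ≥ w_2 ≥ … ≥ w_p ≥ 0. Then, with the conventions w*_{p+1} = 0 and y_{p+1} = 0, for every j ∈ {1,…,p}: (i) either Σ_{i=1}^j (y_i − λ_i) = Σ_{i=1}^j w*_i or w*_j = w*_{j+1}; and (ii) y_j − w*_j ≥ y_{j+1} − w*_{j+1}. -/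
noncomputable section

/-- Feasible set of the ODS linear program:
`∑_{i=1}^k (y_i − λ_i) ≤ ∑_{i=1}^k w_i` for every `k`, and `w_1 ≥ … ≥ w_p ≥ 0`. -/
def LPFeas {p : ℕ} (y lam w : Fin p → ℝ) : Prop :=
  (∀ k : Fin p, ∑ i ∈ Finset.Iic k, (y i - lam i) ≤ ∑ i ∈ Finset.Iic k, w i) ∧
    Antitone w ∧ (∀ i, 0 ≤ w i)

/-- Extension of a vector by zero: `extz w j = w j` for `j < p` and `0` otherwise
(implements the conventions `w_{p+1} = 0`, `y_{p+1} = 0`). -/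
def extz {p : ℕ} (w : Fin p → ℝ) (j : ℕ) : ℝ :=
  if h : j < p then w ⟨j, h⟩ else 0

/-! Extend `w` and `λ` by `w_{p+1} = λ_{p+1} = 0`. If the constraint at `j` is slack and
`w_j > w_{j+1}`, moving a small mass `ε` from `w_j` to `w_{j+1}` lowers only the `j`-th partial
sum of `w`, keeps `w` antitone and nonnegative, and lowers the objective by
`ε (λ_j - λ_{j+1}) > 0`; this is (i). For (ii), if `w_j = w_{j+1}` it is the monotonicity of `y`.
Otherwise the constraint at `j` is tight, and comparing it with the constraints at `j - 1` and
`j + 1` gives `w_j ≤ y_j - λ_j` and `y_{j+1} - λ_{j+1} ≤ w_{j+1}`, hence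
`y_{j+1} - w_{j+1} ≤ λ_{j+1} < λ_j ≤ y_j - w_j`. -/

open Finset

section ZeroExtension

variable {p : ℕ}

@[simp]
lemma extz_val (w : Fin p → ℝ) (i : Fin p) : extz w i = w i := by
  simp [extz]

lemma sum_Iic_eq_sum_range_extz (f : Fin p → ℝ) (k : Fin p) :
    ∑ i ∈ Iic k, f i = ∑ n ∈ range (k + 1), extz f n := by
  rw [Nat.range_succ_eq_Iic, ← Fin.map_valEmbedding_Iic, sum_map]
  simp

lemma antitone_extz_iff {w : Fin p → ℝ} : Antitone (extz w) ↔ Antitone w ∧ ∀ i, 0 ≤ w i := by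
  constructor
  · intro h
    refine ⟨fun a b hab => ?_, fun i => ?_⟩
    · simpa using h (Fin.le_def.mp hab)
    · simpa [extz] using h i.isLt.le
  · rintro ⟨hw, hnn⟩
    refine antitone_nat_of_succ_le fun n => ?_
    unfold extz
    split_ifs
    · exact hw (Fin.le_def.mpr n.le_succ)
    · omega
    · exact hnn _
    · rfl

lemma extz_succ_lt_of_strictAnti {lam : Fin p → ℝ} (hlam : StrictAnti lam)
    (hpos : ∀ i, 0 < lam i) (j : Fin p) : extz lam (j + 1) < lam j := by
  unfold extz
  split_ifs with h
  · exact hlam (Fin.lt_def.mpr j.val.lt_succ_self)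
  · exact hpos j

lemma sum_Iic_ite_val_eq (k : Fin p) (m : ℕ) (c : ℝ) :
    ∑ i ∈ Iic k, (if (i : ℕ) = m then c else 0) = if m ≤ k then c else 0 := by
  rw [sum_Iic_eq_sum_range_extz]
  have hk : ∀ n ∈ range (k + 1), extz (fun i : Fin p => if (i : ℕ) = m then c else 0) n =
      if n = m then c else 0 := fun n hn => by
    simp [extz, (mem_range.mp hn).trans_le k.isLt]
  simp [sum_congr rfl hk]

lemma sum_mul_ite_val_eq (f : Fin p → ℝ) (m : ℕ) (c : ℝ) :
    ∑ i, f i * (if (i : ℕ) = m then c else 0) = extz f m * c := by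
  unfold extz
  split_ifs with h
  · rw [sum_eq_single ⟨m, h⟩ (fun i _ hi => by simp [Fin.ext_iff.not.mp hi]) (by simp)]
    simp
  · rw [zero_mul]
    exact sum_eq_zero fun i _ => by simp [show (i : ℕ) ≠ m by omega]

end ZeroExtension

section Transfer

variable {p : ℕ}

-- When `m + 1 = p` the mass `ε` taken from coordinate `m` leaves the vector.
def transfer (w : Fin p → ℝ) (m : ℕ) (ε : ℝ) : Fin p → ℝ := fun i =>
  w i - (if (i : ℕ) = m then ε else 0) + (if (i : ℕ) = m + 1 then ε else 0)

lemma sum_Iic_transfer (w : Fin p → ℝ) (m : ℕ) (ε : ℝ) (k : Fin p) :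
    ∑ i ∈ Iic k, transfer w m ε i = ∑ i ∈ Iic k, w i - if (k : ℕ) = m then ε else 0 := by
  simp only [transfer, sum_add_distrib, sum_sub_distrib, sum_Iic_ite_val_eq]
  split_ifs <;> first | omega | ring

lemma sum_mul_transfer (lam w : Fin p → ℝ) (m : ℕ) (ε : ℝ) :
    ∑ i, lam i * transfer w m ε i =
      ∑ i, lam i * w i - ε * (extz lam m - extz lam (m + 1)) := by
  simp only [transfer, mul_add, mul_sub, sum_add_distrib, sum_sub_distrib, sum_mul_ite_val_eq]
  ring

lemma antitone_extz_transfer {w : Fin p → ℝ} (hw : Antitone (extz w)) {m : ℕ}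
    {ε : ℝ} (hε : 0 ≤ ε) (hgap : 2 * ε ≤ extz w m - extz w (m + 1)) :
    Antitone (extz (transfer w m ε)) := by
  refine antitone_nat_of_succ_le fun n => ?_
  have hn := hw n.le_succ
  clear hw
  simp only [extz, transfer] at *
  split_ifs at * <;> subst_vars <;> first | omega | linarith

end Transfer

section PartialSums

variable {p : ℕ} {g : Fin p → ℝ}

lemma sum_range_extz_nonpos (hg : ∀ k, ∑ i ∈ Iic k, g i ≤ 0) {n : ℕ} (hn : n ≤ p) :
    ∑ m ∈ range n, extz g m ≤ 0 := by
  cases n with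
  | zero => simp
  | succ n => simpa [sum_Iic_eq_sum_range_extz] using hg ⟨n, hn⟩

lemma nonneg_of_sum_Iic_eq_zero (hg : ∀ k, ∑ i ∈ Iic k, g i ≤ 0) {j : Fin p}
    (hj : ∑ i ∈ Iic j, g i = 0) : 0 ≤ g j := by
  have := sum_range_extz_nonpos hg j.isLt.le
  rw [sum_Iic_eq_sum_range_extz, sum_range_succ, extz_val] at hj
  linarith

lemma extz_succ_nonpos_of_sum_Iic_eq_zero (hg : ∀ k, ∑ i ∈ Iic k, g i ≤ 0) {j : Fin p}
    (hj : ∑ i ∈ Iic j, g i = 0) : extz g (j + 1) ≤ 0 := by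
  by_cases h : (j : ℕ) + 1 < p
  · have := sum_range_extz_nonpos hg (n := j + 2) h
    rw [sum_range_succ, ← sum_Iic_eq_sum_range_extz, hj] at this
    linarith
  · simp [extz, h]

end PartialSums

namespace LPFeas

variable {p : ℕ} {y lam w : Fin p → ℝ}

lemma lpFeas_transfer (hw : LPFeas y lam w) {j : Fin p} {ε : ℝ} (hε : 0 ≤ ε)
    (hslack : ε ≤ ∑ i ∈ Iic j, w i - ∑ i ∈ Iic j, (y i - lam i))
    (hgap : 2 * ε ≤ w j - extz w (j + 1)) : LPFeas y lam (transfer w j ε) := by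
  obtain ⟨hc, hmono⟩ := hw
  have hanti := antitone_extz_transfer (antitone_extz_iff.2 hmono) (m := j) hε (by rwa [extz_val])
  refine ⟨fun k => ?_, antitone_extz_iff.1 hanti⟩
  rw [sum_Iic_transfer]
  split_ifs with hk
  · rw [Fin.ext hk]
    linarith
  · simpa using hc k

lemma tight_or_flat_of_optimal (hw : LPFeas y lam w)
    (hopt : ∀ u, LPFeas y lam u → ∑ i, lam i * w i ≤ ∑ i, lam i * u i)
    {j : Fin p} (hlam : extz lam (j + 1) < lam j) :
    ∑ i ∈ Iic j, (y i - lam i) = ∑ i ∈ Iic j, w i ∨ w j = extz w (j + 1) := by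
  by_contra! h
  obtain ⟨hslack, hflat⟩ := h
  have hS : 0 < ∑ i ∈ Iic j, w i - ∑ i ∈ Iic j, (y i - lam i) :=
    sub_pos.2 ((hw.1 j).lt_of_ne hslack)
  have hgap : 0 < w j - extz w (j + 1) := by
    have := antitone_extz_iff.2 hw.2 j.val.le_succ
    rw [extz_val] at this
    exact sub_pos.2 (this.lt_of_ne hflat.symm)
  set ε := min (∑ i ∈ Iic j, w i - ∑ i ∈ Iic j, (y i - lam i)) ((w j - extz w (j + 1)) / 2)
  have hε : 0 < ε := lt_min hS (half_pos hgap)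
  have hε_gap : ε ≤ (w j - extz w (j + 1)) / 2 := min_le_right _ _
  have hu := hw.lpFeas_transfer hε.le (min_le_left _ _) (by linarith)
  have := hopt _ hu
  rw [sum_mul_transfer, extz_val] at this
  linarith [mul_pos hε (sub_pos.2 hlam)]

lemma extz_sub_succ_le_of_tight (hw : LPFeas y lam w) {j : Fin p}
    (hlam : extz lam (j + 1) < lam j)
    (ht : ∑ i ∈ Iic j, (y i - lam i) = ∑ i ∈ Iic j, w i) :
    extz y (j + 1) - extz w (j + 1) ≤ y j - w j := by
  set g : Fin p → ℝ := fun i => y i - lam i - w i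
  have hg : ∀ k, ∑ i ∈ Iic k, g i ≤ 0 := fun k => by
    simpa [g, sum_sub_distrib] using hw.1 k
  have hgj : ∑ i ∈ Iic j, g i = 0 := by simp [g, sum_sub_distrib, ht]
  have hj := nonneg_of_sum_Iic_eq_zero hg hgj
  have hsucc := extz_succ_nonpos_of_sum_Iic_eq_zero hg hgj
  have hextz : extz g (j + 1) = extz y (j + 1) - extz lam (j + 1) - extz w (j + 1) := by
    simp only [extz, g]
    split_ifs <;> simp
  simp only [g] at hj
  linarith

end LPFeas

/-- structural properties of solutions of the ODS linear program. -/
theorem lp_sol_structure {p : ℕ} (lam : Fin p → ℝ)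
    (hlam : StrictAnti lam) (hpos : ∀ i, 0 < lam i)
    (y : Fin p → ℝ) (hy : Antitone y) (hynn : ∀ i, 0 ≤ y i)
    (wstar : Fin p → ℝ)
    (hfeas : LPFeas y lam wstar)
    (hopt : ∀ u : Fin p → ℝ, LPFeas y lam u → ∑ i, lam i * wstar i ≤ ∑ i, lam i * u i) :
    ∀ j : Fin p,
      ((∑ i ∈ Finset.Iic j, (y i - lam i)) = ∑ i ∈ Finset.Iic j, wstar i ∨
        wstar j = extz wstar (j.val + 1)) ∧
      extz y (j.val + 1) - extz wstar (j.val + 1) ≤ y j - wstar j := by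
  intro j
  have hlam_succ := extz_succ_lt_of_strictAnti hlam hpos j
  have htf := hfeas.tight_or_flat_of_optimal hopt hlam_succ
  refine ⟨htf, ?_⟩
  rcases htf with htight | hflat
  · exact hfeas.extz_sub_succ_le_of_tight hlam_succ htight
  · have hy_succ := antitone_extz_iff.2 ⟨hy, hynn⟩ j.val.le_succ
    rw [extz_val] at hy_succ
    linarith
end
end

section
/- Assume λ_1 > λ_2 > … > λ_p > 0 and y_1 ≥ y_2 ≥ … ≥ y_p ≥ 0. Then the linear program: minimize Σ_{i=1}^p λ_i w_i subject to Σ_{i=1}^k (y_i − λ_i) ≤ Σ_{i=1}^k w_i for k = 1,…,p and w_1 ≥ w_2 ≥ … ≥ w_p ≥ 0, has a unique solution. -/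
noncomputable section

namespace LPAux

variable {p : ℕ}

/-- Prefix sums (over ℕ) of the zero-extension. -/
def Pfx (w : Fin p → ℝ) (k : ℕ) : ℝ := ∑ j ∈ Finset.range k, extz w j

lemma Pfx_zero (w : Fin p → ℝ) : Pfx w 0 = 0 := by simp [Pfx]

lemma Pfx_succ (w : Fin p → ℝ) (k : ℕ) : Pfx w (k + 1) = Pfx w k + extz w k :=
  Finset.sum_range_succ _ _

lemma extz_apply (w : Fin p → ℝ) (i : Fin p) : extz w i.1 = w i := by
  simp [extz, i.2]

lemma extz_nonneg {w : Fin p → ℝ} (hw : ∀ i, 0 ≤ w i) (k : ℕ) : 0 ≤ extz w k := by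
  unfold extz; split
  · exact hw _
  · exact le_rfl

lemma extz_succ_le {w : Fin p → ℝ} (hmono : Antitone w) (hnn : ∀ i, 0 ≤ w i) (k : ℕ) :
    extz w (k + 1) ≤ extz w k := by
  unfold extz
  by_cases h1 : k + 1 < p
  · have h0 : k < p := Nat.lt_of_succ_lt h1
    rw [dif_pos h1, dif_pos h0]
    exact hmono (by simp [Fin.le_def])
  · rw [dif_neg h1]
    split
    · exact hnn _
    · exact le_rfl

lemma sum_Iic_eq_Pfx (f : Fin p → ℝ) (k : Fin p) :
    ∑ i ∈ Finset.Iic k, f i = Pfx f (k.1 + 1) := by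
  unfold Pfx
  symm
  refine Finset.sum_bij
    (fun (a : ℕ) (ha : a ∈ Finset.range (k.1 + 1)) =>
      (⟨a, Nat.lt_of_le_of_lt (Nat.lt_succ_iff.mp (Finset.mem_range.mp ha)) k.2⟩ : Fin p))
    ?_ ?_ ?_ ?_
  · intro a ha
    simp only [Finset.mem_Iic, Fin.le_def]
    exact Nat.lt_succ_iff.mp (Finset.mem_range.mp ha)
  · intro a ha b hb h
    simpa using congrArg Fin.val h
  · intro b hb
    refine ⟨b.1, Finset.mem_range.mpr (Nat.lt_succ_of_le (by exact_mod_cast Finset.mem_Iic.mp hb)), ?_⟩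
    simp
  · intro a ha
    simp [extz, Nat.lt_of_le_of_lt (Nat.lt_succ_iff.mp (Finset.mem_range.mp ha)) k.2]

/-- Abel summation identity. -/
lemma abel (lam w : Fin p → ℝ) :
    ∑ i, lam i * w i
      = ∑ k ∈ Finset.range p, (extz lam k - extz lam (k + 1)) * Pfx w (k + 1) := by
  have h1 : ∑ i, lam i * w i = ∑ k ∈ Finset.range p, extz lam k * extz w k := by
    rw [← Fin.sum_univ_eq_sum_range (fun k => extz lam k * extz w k) p]
    exact Finset.sum_congr rfl fun i _ => by rw [extz_apply, extz_apply]
  have key : ∀ k ∈ Finset.range p,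
      (extz lam k - extz lam (k + 1)) * Pfx w (k + 1)
        = extz lam k * extz w k
          + (extz lam k * Pfx w k - extz lam (k + 1) * Pfx w (k + 1)) := by
    intro k _
    rw [Pfx_succ]
    ring
  rw [h1, Finset.sum_congr rfl key, Finset.sum_add_distrib,
    Finset.sum_range_sub' (fun k => extz lam k * Pfx w k) p]
  have hp : extz lam p = 0 := by simp [extz]
  simp [Pfx_zero, hp]

/-- The objective. -/
def obj (lam w : Fin p → ℝ) : ℝ := ∑ i, lam i * w i

lemma coef_pos {lam : Fin p → ℝ} (hlam : StrictAnti lam) (hpos : ∀ i, 0 < lam i)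
    {k : ℕ} (hk : k < p) : 0 < extz lam k - extz lam (k + 1) := by
  have h0 : extz lam k = lam ⟨k, hk⟩ := dif_pos hk
  by_cases h1 : k + 1 < p
  · have : extz lam (k + 1) = lam ⟨k + 1, h1⟩ := dif_pos h1
    have hlt : lam ⟨k + 1, h1⟩ < lam ⟨k, hk⟩ := hlam (by simp [Fin.lt_def])
    rw [h0, this]; linarith
  · have : extz lam (k + 1) = 0 := dif_neg h1
    rw [h0, this]
    simpa using hpos ⟨k, hk⟩

lemma obj_le_of_Pfx_le {lam : Fin p → ℝ} (hlam : StrictAnti lam) (hpos : ∀ i, 0 < lam i)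
    {w u : Fin p → ℝ} (h : ∀ k ∈ Finset.range p, Pfx w (k + 1) ≤ Pfx u (k + 1)) :
    obj lam w ≤ obj lam u := by
  unfold obj
  rw [abel, abel]
  refine Finset.sum_le_sum fun k hk => ?_
  exact mul_le_mul_of_nonneg_left (h k hk)
    (le_of_lt (coef_pos hlam hpos (Finset.mem_range.mp hk)))

lemma Pfx_eq_of_obj_eq {lam : Fin p → ℝ} (hlam : StrictAnti lam) (hpos : ∀ i, 0 < lam i)
    {w u : Fin p → ℝ} (h : ∀ k ∈ Finset.range p, Pfx w (k + 1) ≤ Pfx u (k + 1))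
    (heq : obj lam w = obj lam u) :
    ∀ k ∈ Finset.range p, Pfx w (k + 1) = Pfx u (k + 1) := by
  intro k hk
  by_contra hne
  have hlt : Pfx w (k + 1) < Pfx u (k + 1) := lt_of_le_of_ne (h k hk) hne
  have hstrict : obj lam w < obj lam u := by
    unfold obj
    rw [abel, abel]
    refine Finset.sum_lt_sum (fun j hj => mul_le_mul_of_nonneg_left (h j hj)
      (le_of_lt (coef_pos hlam hpos (Finset.mem_range.mp hj)))) ⟨k, hk, ?_⟩
    exact mul_lt_mul_of_pos_left hlt (coef_pos hlam hpos (Finset.mem_range.mp hk))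
  linarith

lemma eq_of_Pfx_eq {w u : Fin p → ℝ}
    (h : ∀ k ∈ Finset.range p, Pfx w (k + 1) = Pfx u (k + 1)) : w = u := by
  have hall : ∀ k, k ≤ p → Pfx w k = Pfx u k := by
    intro k hk
    cases k with
    | zero => rw [Pfx_zero, Pfx_zero]
    | succ n => exact h n (Finset.mem_range.mpr hk)
  funext i
  have h1 : Pfx w (i.1 + 1) = Pfx u (i.1 + 1) := hall _ i.2
  have h2 : Pfx w i.1 = Pfx u i.1 := hall _ (le_of_lt i.2)
  have e1 := Pfx_succ w i.1
  have e2 := Pfx_succ u i.1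
  have : extz w i.1 = extz u i.1 := by linarith
  rwa [extz_apply, extz_apply] at this

end LPAux

open LPAux in
/-- the ODS linear program has a unique solution. -/
theorem lp_sol_unique {p : ℕ} (lam : Fin p → ℝ)
    (hlam : StrictAnti lam) (hpos : ∀ i, 0 < lam i)
    (y : Fin p → ℝ) (hy : Antitone y) (hynn : ∀ i, 0 ≤ y i) :
    ∃! w : Fin p → ℝ, LPFeas y lam w ∧
      ∀ u : Fin p → ℝ, LPFeas y lam u → ∑ i, lam i * w i ≤ ∑ i, lam i * u i := by
  -- y itself is feasible
  have hyfeas : LPFeas y lam y := by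
    refine ⟨fun k => Finset.sum_le_sum fun i _ => ?_, hy, hynn⟩
    have := hpos i; linarith
  -- the objective is continuous
  have hobj : Continuous (fun w : Fin p → ℝ => ∑ i, lam i * w i) :=
    continuous_finset_sum _ fun i _ => continuous_const.mul (continuous_apply i)
  -- the feasible set is closed
  have hFclosed : IsClosed {w : Fin p → ℝ | LPFeas y lam w} := by
    have h1 : IsClosed {w : Fin p → ℝ |
        ∀ k : Fin p, ∑ i ∈ Finset.Iic k, (y i - lam i) ≤ ∑ i ∈ Finset.Iic k, w i} := by
      rw [Set.setOf_forall]
      exact isClosed_iInter fun k => isClosed_le continuous_const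
        (continuous_finset_sum _ fun i _ => continuous_apply i)
    have h2 : IsClosed {w : Fin p → ℝ | Antitone w} := by
      have : {w : Fin p → ℝ | Antitone w}
          = ⋂ (i : Fin p) (j : Fin p) (_ : i ≤ j), {w : Fin p → ℝ | w j ≤ w i} := by
        ext w; simp [Antitone]
      rw [this]
      exact isClosed_iInter fun i => isClosed_iInter fun j => isClosed_iInter fun _ =>
        isClosed_le (continuous_apply j) (continuous_apply i)
    have h3 : IsClosed {w : Fin p → ℝ | ∀ i, 0 ≤ w i} := by
      rw [Set.setOf_forall]
      exact isClosed_iInter fun i => isClosed_le continuous_const (continuous_apply i)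
    have : {w : Fin p → ℝ | LPFeas y lam w}
        = {w | ∀ k : Fin p, ∑ i ∈ Finset.Iic k, (y i - lam i) ≤ ∑ i ∈ Finset.Iic k, w i}
          ∩ ({w | Antitone w} ∩ {w | ∀ i, 0 ≤ w i}) := by
      ext w; simp [LPFeas, Set.mem_inter_iff]
    rw [this]
    exact h1.inter (h2.inter h3)
  set c : ℝ := ∑ i, lam i * y i with hc
  -- the sublevel feasible set is compact
  set K : Set (Fin p → ℝ) :=
    {w | LPFeas y lam w ∧ ∑ i, lam i * w i ≤ c} with hK
  have hKclosed : IsClosed K :=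
    hFclosed.inter (isClosed_le hobj continuous_const)
  have hKsub : K ⊆ Set.pi Set.univ fun i => Set.Icc (0 : ℝ) (c / lam i) := by
    rintro w ⟨⟨_, _, hnn⟩, hle⟩ i _
    refine ⟨hnn i, ?_⟩
    have hi : lam i * w i ≤ ∑ j, lam j * w j :=
      Finset.single_le_sum (f := fun j => lam j * w j)
        (fun j _ => mul_nonneg (hpos j).le (hnn j)) (Finset.mem_univ i)
    rw [le_div_iff₀ (hpos i)]
    calc w i * lam i = lam i * w i := mul_comm _ _
      _ ≤ c := le_trans hi hle
  have hKcompact : IsCompact K :=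
    IsCompact.of_isClosed_subset
      (isCompact_univ_pi fun i => isCompact_Icc) hKclosed hKsub
  have hyK : y ∈ K := ⟨hyfeas, le_rfl⟩
  obtain ⟨w, hwK, hwmin⟩ :=
    hKcompact.exists_isMinOn ⟨y, hyK⟩ (hobj.continuousOn)
  have hwopt : ∀ u : Fin p → ℝ, LPFeas y lam u →
      ∑ i, lam i * w i ≤ ∑ i, lam i * u i := by
    intro u hu
    rcases le_total (∑ i, lam i * u i) c with h | h
    · exact hwmin ⟨hu, h⟩
    · exact le_trans (hwmin hyK) h
  refine ⟨w, ⟨hwK.1, hwopt⟩, ?_⟩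
  -- uniqueness
  rintro u ⟨hufeas, huopt⟩
  -- the two objective values agree
  have hobjeq : (∑ i, lam i * u i) = ∑ i, lam i * w i :=
    le_antisymm (huopt w hwK.1) (hwopt u hufeas)
  -- prefix-sum minimum construction
  set M : ℕ → ℝ := fun k => min (Pfx w k) (Pfx u k) with hM
  set m : Fin p → ℝ := fun i => M (i.1 + 1) - M i.1 with hm
  obtain ⟨hwc, hwa, hwn⟩ := hwK.1
  obtain ⟨huc, hua, hun⟩ := hufeas
  have hMmono : ∀ k, M k ≤ M (k + 1) := by
    intro k
    refine le_min ?_ ?_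
    · exact le_trans (min_le_left _ _) (by rw [Pfx_succ]; nlinarith [extz_nonneg hwn k])
    · exact le_trans (min_le_right _ _) (by rw [Pfx_succ]; nlinarith [extz_nonneg hun k])
  have hMconc : ∀ k, M (k + 2) - M (k + 1) ≤ M (k + 1) - M k := by
    intro k
    rcases le_total (Pfx w (k + 1)) (Pfx u (k + 1)) with h | h
    · have h1 : M (k + 1) = Pfx w (k + 1) := min_eq_left h
      have h2 : M (k + 2) ≤ Pfx w (k + 2) := min_le_left _ _
      have h3 : M k ≤ Pfx w k := min_le_left _ _
      have h4 := extz_succ_le hwa hwn k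
      have e1 := Pfx_succ w k
      have e2 := Pfx_succ w (k + 1)
      rw [h1]; linarith
    · have h1 : M (k + 1) = Pfx u (k + 1) := min_eq_right h
      have h2 : M (k + 2) ≤ Pfx u (k + 2) := min_le_right _ _
      have h3 : M k ≤ Pfx u k := min_le_right _ _
      have h4 := extz_succ_le hua hun k
      have e1 := Pfx_succ u k
      have e2 := Pfx_succ u (k + 1)
      rw [h1]; linarith
  have hPm : ∀ k, k ≤ p → Pfx m k = M k := by
    intro k hk
    induction k with
    | zero => simp [Pfx_zero, hM]
    | succ n ih =>
      have hnp : n < p := hk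
      rw [Pfx_succ, ih (le_of_lt hnp)]
      have : extz m n = M (n + 1) - M n := by
        unfold extz; rw [dif_pos hnp]
      rw [this]; ring
  have hmfeas : LPFeas y lam m := by
    refine ⟨?_, ?_, ?_⟩
    · intro k
      rw [sum_Iic_eq_Pfx, sum_Iic_eq_Pfx, hPm _ k.2]
      have hw' := hwc k
      have hu' := huc k
      rw [sum_Iic_eq_Pfx, sum_Iic_eq_Pfx] at hw' hu'
      exact le_min hw' hu'
    · have hg : Antitone (fun k : ℕ => M (k + 1) - M k) :=
        antitone_nat_of_succ_le fun k => hMconc k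
      intro i j hij
      exact hg (show i.1 ≤ j.1 from hij)
    · intro i
      have := hMmono i.1
      simp only [hm]; linarith
  -- m is at least as good as both w and u, hence equal objective
  have hPmw : ∀ k ∈ Finset.range p, Pfx m (k + 1) ≤ Pfx w (k + 1) := by
    intro k hk
    rw [hPm _ (Finset.mem_range.mp hk)]
    exact min_le_left _ _
  have hPmu : ∀ k ∈ Finset.range p, Pfx m (k + 1) ≤ Pfx u (k + 1) := by
    intro k hk
    rw [hPm _ (Finset.mem_range.mp hk)]
    exact min_le_right _ _
  have hobjm : obj lam m = obj lam w := by
    refine le_antisymm (obj_le_of_Pfx_le hlam hpos hPmw) (hwopt m hmfeas)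
  have hobjm' : obj lam m = obj lam u := by
    rw [hobjm]; exact hobjeq.symm
  have hw' := Pfx_eq_of_obj_eq hlam hpos hPmw hobjm
  have hu' := Pfx_eq_of_obj_eq hlam hpos hPmu hobjm'
  have : u = w := eq_of_Pfx_eq fun k hk => by rw [← hu' k hk, hw' k hk]
  exact this
end
end

section
/- Let y_1 ≥ … ≥ y_p ≥ 0 and λ_1 ≥ … ≥ λ_p ≥ 0, let μ > 0, and let w* be the (unique, by strong convexity) minimizer of f_μ(w) = Σ_{i=1}^p λ_i w_i + (μ/2)‖w‖² over the feasible set { w : Σ_{i=1}^k (y_i − λ_i) ≤ Σ_{i=1}^k w_i for k = 1,…,p, and w_1 ≥ … ≥ w_p ≥ 0 }. Then, with the conventions w*_{p+1} = 0 and y_{p+1} = 0, for every j ∈ {1,…,p} either w*_j = w*_{j+1} or Σ_{i=1}^j (y_i − λ_i) = Σ_{i=1}^j w*_i. -/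
noncomputable section

/-- Perturbed objective `f_μ(w) = ∑ λ_i w_i + (μ/2)‖w‖²`. -/
def fmu {p : ℕ} (lam : Fin p → ℝ) (μ : ℝ) (w : Fin p → ℝ) : ℝ :=
  (∑ i, lam i * w i) + μ / 2 * ∑ i, w i ^ 2

/-- structure of the minimizer of the perturbed ODS linear program. -/
theorem lp_perturbed_structure {p : ℕ} (lam : Fin p → ℝ)
    (hlam : Antitone lam) (hlamnn : ∀ i, 0 ≤ lam i)
    (y : Fin p → ℝ) (hy : Antitone y) (hynn : ∀ i, 0 ≤ y i)
    (μ : ℝ) (hμ : 0 < μ)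
    (wstar : Fin p → ℝ)
    (hfeas : LPFeas y lam wstar)
    (hopt : ∀ u : Fin p → ℝ, LPFeas y lam u → fmu lam μ wstar ≤ fmu lam μ u) :
    ∀ j : Fin p,
      wstar j = extz wstar (j.val + 1) ∨
        (∑ i ∈ Finset.Iic j, (y i - lam i)) = ∑ i ∈ Finset.Iic j, wstar i := by
  intro j
  by_contra hcon
  push_neg at hcon
  obtain ⟨h1, h2⟩ := hcon
  obtain ⟨hcons, hmono, hnn⟩ := hfeas
  have hslack : ∑ i ∈ Finset.Iic j, (y i - lam i) < ∑ i ∈ Finset.Iic j, wstar i :=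
    lt_of_le_of_ne (hcons j) h2
  set δ : ℝ := ∑ i ∈ Finset.Iic j, wstar i - ∑ i ∈ Finset.Iic j, (y i - lam i) with hδdef
  have hδpos : 0 < δ := sub_pos.mpr hslack
  by_cases hj : j.val + 1 < p
  · -- Case A: j is not the last index
    set i' : Fin p := ⟨j.val + 1, hj⟩ with hi'
    have hval' : i'.val = j.val + 1 := rfl
    have hji' : j < i' := by simp [Fin.lt_def, hi']
    have hne : j ≠ i' := ne_of_lt hji'
    have hext : extz wstar (j.val + 1) = wstar i' := by simp [extz, hj, hi']
    have hwlt : wstar i' < wstar j := by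
      rcases lt_or_eq_of_le (hmono hji'.le) with h | h
      · exact h
      · exact absurd (by rw [hext, h]) h1
    set g : ℝ := wstar j - wstar i' with hgdef
    have hgpos : 0 < g := sub_pos.mpr hwlt
    set ε : ℝ := min δ (g / 2) with hεdef
    have hε0 : 0 < ε := lt_min hδpos (by linarith)
    have hεδ : ε ≤ δ := min_le_left _ _
    have hεg : ε ≤ g / 2 := min_le_right _ _
    set u : Fin p → ℝ := fun i =>
      wstar i + (if i = j then -ε else 0) + (if i = i' then ε else 0) with hudef
    have huj : u j = wstar j - ε := by simp [hudef, hne]; ring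
    have hui' : u i' = wstar i' + ε := by simp [hudef, hne.symm]
    have huo : ∀ i, i ≠ j → i ≠ i' → u i = wstar i := by
      intro i ha hb; simp [hudef, ha, hb]
    have hsum : ∀ k : Fin p, ∑ i ∈ Finset.Iic k, u i =
        ∑ i ∈ Finset.Iic k, wstar i + (if j ≤ k then -ε else 0)
          + (if i' ≤ k then ε else 0) := by
      intro k
      simp only [hudef]
      rw [Finset.sum_add_distrib, Finset.sum_add_distrib,
        Finset.sum_ite_eq' (Finset.Iic k) j (fun _ => -ε),
        Finset.sum_ite_eq' (Finset.Iic k) i' (fun _ => ε)]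
      simp [Finset.mem_Iic]
    have hufeas : LPFeas y lam u := by
      refine ⟨?_, ?_, ?_⟩
      · intro k
        rw [hsum k]
        by_cases hk2 : i' ≤ k
        · have hk1 : j ≤ k := le_trans hji'.le hk2
          rw [if_pos hk1, if_pos hk2]
          have := hcons k
          linarith
        · by_cases hk1 : j ≤ k
          · have hkj : k = j := by
              apply le_antisymm _ hk1
              have hklt : k.val < i'.val := by
                by_contra hc
                exact hk2 (Fin.le_def.mpr (not_lt.mp hc))
              exact Fin.le_def.mpr (by omega)
            rw [if_pos hk1, if_neg hk2, hkj]
            linarith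
          · rw [if_neg hk1, if_neg hk2]
            have := hcons k
            linarith
      · intro a b hab
        have hval : a.val ≤ b.val := hab
        by_cases haj : a = j
        · by_cases hbj : b = j
          · rw [haj, hbj]
          · by_cases hbi : b = i'
            · rw [haj, hbi, hui', huj]; linarith
            · have hbig : (i' : Fin p) ≤ b := by
                have h1' : j.val ≠ b.val := fun h => hbj (Fin.ext h.symm)
                have h2' : b.val ≠ i'.val := fun h => hbi (Fin.ext h)
                rw [haj] at hval
                exact Fin.le_def.mpr (by omega)
              rw [haj, huj, huo b hbj hbi]
              have h3 := hmono hbig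
              linarith
        · by_cases hai : a = i'
          · by_cases hbi : b = i'
            · rw [hai, hbi]
            · have hbj : b ≠ j := by
                intro h
                rw [hai, h] at hval
                omega
              rw [hai, hui', huo b hbj hbi]
              have h3 : wstar b ≤ wstar i' := hmono (by rw [← hai]; exact hab)
              linarith
          · by_cases hbj : b = j
            · rw [hbj, huj, huo a haj hai]
              have := hmono (show a ≤ j by rw [← hbj]; exact hab)
              linarith
            · by_cases hbi : b = i'
              · have haj' : a ≤ j := by
                  have h1' : a.val ≠ i'.val := fun h => hai (Fin.ext h)
                  rw [hbi] at hval
                  exact Fin.le_def.mpr (by omega)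
                rw [hbi, hui', huo a haj hai]
                have h3 := hmono haj'
                linarith
              · rw [huo a haj hai, huo b hbj hbi]
                exact hmono hab
      · intro i
        by_cases ha : i = j
        · rw [ha, huj]
          have := hnn i'
          linarith
        · by_cases hb : i = i'
          · rw [hb, hui']; have := hnn i'; linarith
          · rw [huo i ha hb]; exact hnn i
    -- objective strictly decreases
    have e1 : ∀ i, lam i * u i = lam i * wstar i +
        ((if i = j then (-ε) * lam j else 0) + (if i = i' then ε * lam i' else 0)) := by
      intro i
      by_cases ha : i = j
      · rw [ha, huj, if_pos rfl, if_neg hne]; ring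
      · by_cases hb : i = i'
        · rw [hb, hui', if_neg hne.symm, if_pos rfl]; ring
        · rw [huo i ha hb, if_neg ha, if_neg hb]; ring
    have e2 : ∀ i, u i ^ 2 = wstar i ^ 2 +
        ((if i = j then (wstar j - ε) ^ 2 - wstar j ^ 2 else 0) +
         (if i = i' then (wstar i' + ε) ^ 2 - wstar i' ^ 2 else 0)) := by
      intro i
      by_cases ha : i = j
      · rw [ha, huj, if_pos rfl, if_neg hne]; ring
      · by_cases hb : i = i'
        · rw [hb, hui', if_neg hne.symm, if_pos rfl]; ring
        · rw [huo i ha hb, if_neg ha, if_neg hb]; ring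
    have hsum1 : ∑ i, lam i * u i = (∑ i, lam i * wstar i) + ((-ε) * lam j + ε * lam i') := by
      rw [Finset.sum_congr rfl (fun i _ => e1 i), Finset.sum_add_distrib,
        Finset.sum_add_distrib,
        Finset.sum_ite_eq' Finset.univ j (fun _ => (-ε) * lam j),
        Finset.sum_ite_eq' Finset.univ i' (fun _ => ε * lam i')]
      simp
    have hsum2 : ∑ i, u i ^ 2 = (∑ i, wstar i ^ 2) +
        (((wstar j - ε) ^ 2 - wstar j ^ 2) + ((wstar i' + ε) ^ 2 - wstar i' ^ 2)) := by
      rw [Finset.sum_congr rfl (fun i _ => e2 i), Finset.sum_add_distrib,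
        Finset.sum_add_distrib,
        Finset.sum_ite_eq' Finset.univ j
          (fun _ => (wstar j - ε) ^ 2 - wstar j ^ 2),
        Finset.sum_ite_eq' Finset.univ i'
          (fun _ => (wstar i' + ε) ^ 2 - wstar i' ^ 2)]
      simp
    have hlamle : lam i' ≤ lam j := hlam hji'.le
    have hlt : fmu lam μ u < fmu lam μ wstar := by
      unfold fmu
      rw [hsum1, hsum2]
      nlinarith [mul_pos hμ hε0, mul_nonneg hε0.le (sub_nonneg.mpr hlamle),
        mul_pos (mul_pos hμ hε0) (show 0 < g - ε by linarith)]
    exact absurd (hopt u hufeas) (not_le.mpr hlt)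
  · -- Case B: j is the last index
    have hjp : j.val + 1 = p := by omega
    have hext : extz wstar (j.val + 1) = 0 := by simp [extz, hj]
    have hwpos : 0 < wstar j := by
      rcases lt_or_eq_of_le (hnn j) with h | h
      · exact h
      · exact absurd (by rw [hext, ← h]) h1
    set ε : ℝ := min δ (wstar j) with hεdef
    have hε0 : 0 < ε := lt_min hδpos hwpos
    have hεδ : ε ≤ δ := min_le_left _ _
    have hεw : ε ≤ wstar j := min_le_right _ _
    set u : Fin p → ℝ := fun i => wstar i + (if i = j then -ε else 0) with hudef
    have huj : u j = wstar j - ε := by simp [hudef]; ring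
    have huo : ∀ i, i ≠ j → u i = wstar i := by intro i ha; simp [hudef, ha]
    have hlej : ∀ k : Fin p, k ≤ j := by
      intro k
      exact Fin.le_def.mpr (by omega)
    have hsum : ∀ k : Fin p, ∑ i ∈ Finset.Iic k, u i =
        ∑ i ∈ Finset.Iic k, wstar i + (if j ≤ k then -ε else 0) := by
      intro k
      simp only [hudef]
      rw [Finset.sum_add_distrib, Finset.sum_ite_eq' (Finset.Iic k) j (fun _ => -ε)]
      simp [Finset.mem_Iic]
    have hufeas : LPFeas y lam u := by
      refine ⟨?_, ?_, ?_⟩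
      · intro k
        rw [hsum k]
        by_cases hk1 : j ≤ k
        · have hkj : k = j := le_antisymm (hlej k) hk1
          rw [if_pos hk1, hkj]
          linarith
        · rw [if_neg hk1]
          have := hcons k
          linarith
      · intro a b hab
        by_cases hbj : b = j
        · by_cases haj : a = j
          · rw [haj, hbj]
          · rw [hbj, huj, huo a haj]
            have := hmono (hlej a)
            linarith
        · have haj : a ≠ j := by
            intro h
            exact hbj (le_antisymm (hlej b) (by rw [← h]; exact hab))
          rw [huo a haj, huo b hbj]
          exact hmono hab
      · intro i
        by_cases ha : i = j
        · rw [ha, huj]; linarith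
        · rw [huo i ha]; exact hnn i
    have e1 : ∀ i, lam i * u i = lam i * wstar i + (if i = j then (-ε) * lam j else 0) := by
      intro i
      by_cases ha : i = j
      · rw [ha, huj, if_pos rfl]; ring
      · rw [huo i ha, if_neg ha]; ring
    have e2 : ∀ i, u i ^ 2 = wstar i ^ 2 +
        (if i = j then (wstar j - ε) ^ 2 - wstar j ^ 2 else 0) := by
      intro i
      by_cases ha : i = j
      · rw [ha, huj, if_pos rfl]; ring
      · rw [huo i ha, if_neg ha]; ring
    have hsum1 : ∑ i, lam i * u i = (∑ i, lam i * wstar i) + (-ε) * lam j := by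
      rw [Finset.sum_congr rfl (fun i _ => e1 i), Finset.sum_add_distrib,
        Finset.sum_ite_eq' Finset.univ j (fun _ => (-ε) * lam j)]
      simp
    have hsum2 : ∑ i, u i ^ 2 = (∑ i, wstar i ^ 2) +
        ((wstar j - ε) ^ 2 - wstar j ^ 2) := by
      rw [Finset.sum_congr rfl (fun i _ => e2 i), Finset.sum_add_distrib,
        Finset.sum_ite_eq' Finset.univ j
          (fun _ => (wstar j - ε) ^ 2 - wstar j ^ 2)]
      simp
    have hlt : fmu lam μ u < fmu lam μ wstar := by
      unfold fmu
      rw [hsum1, hsum2]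
      nlinarith [mul_nonneg hε0.le (hlamnn j),
        mul_pos (mul_pos hμ hε0) (show 0 < 2 * wstar j - ε by linarith)]
    exact absurd (hopt u hufeas) (not_le.mpr hlt)
end
end

section
/- Let y_1 ≥ … ≥ y_p ≥ 0 and λ_1 ≥ … ≥ λ_p ≥ 0, let μ > 0, and let w* be the unique minimizer of f_μ(w) = Σ_{i=1}^p λ_i w_i + (μ/2)‖w‖² over the feasible set { w : Σ_{i=1}^k (y_i − λ_i) ≤ Σ_{i=1}^k w_i for k = 1,…,p, and w_1 ≥ … ≥ w_p ≥ 0 }. Suppose j < l and y_j − λ_j ≤ y_{j+1} − λ_{j+1} ≤ … ≤ y_l − λ_l, and set I = {j,…,l}. Then (i) w*_j = w*_{j+1} = … = w*_l; and (ii) w* is also the minimizer of the same perturbed problem with y and λ replaced by ỹ and λ̃, where ỹ_i equals the average of (y_k)_{k∈I} for i ∈ I and ỹ_i = y_i otherwise, and λ̃_i equals the average of (λ_k)_{k∈I} for i ∈ I and λ̃_i = λ_i otherwise. -/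
noncomputable section

/-- Replace the entries of `x` on the segment `{j, …, l}` by their average value. -/
def avgMod {p : ℕ} (x : Fin p → ℝ) (j l : Fin p) : Fin p → ℝ :=
  fun i => if i ∈ Finset.Icc j l then
    (∑ k ∈ Finset.Icc j l, x k) / ((Finset.Icc j l).card : ℝ) else x i


/-!
Averaging a vector over the segment `I = {j, …, l}` is the orthogonal projection onto the
vectors that are constant on `I`. It preserves antitonicity and nonnegativity, and the prefix
sums of an averaged vector interpolate linearly across `I`, so it also preserves the prefix-sum
constraints. Since `y − λ` increases along `I`, its prefix sums lie below those of its average,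
so the constraints with averaged data imply the original ones. Averaging `w*` therefore keeps it
feasible; by Chebyshev's inequality (`λ` and `w*` both decrease) it does not increase the linear
term, while it lowers `‖w‖²` by `‖w* − w̄*‖²`, so optimality forces `w* = w̄*`. Finally, for
`u` feasible for the averaged problem, `ū` is feasible for the original one and
`f̃(w*) = f(w*) ≤ f(ū) = f̃(ū) ≤ f̃(u)`.
-/

open Finset
open scoped BigOperators

variable {ι : Type*}

def avgOn [DecidableEq ι] (s : Finset ι) (x : ι → ℝ) (i : ι) : ℝ :=
  if i ∈ s then 𝔼 k ∈ s, x k else x i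

section Projection

variable [DecidableEq ι] {s : Finset ι} {x z : ι → ℝ} {i : ι}

lemma avgOn_of_mem (hi : i ∈ s) : avgOn s x i = 𝔼 k ∈ s, x k := if_pos hi

lemma avgOn_of_notMem (hi : i ∉ s) : avgOn s x i = x i := if_neg hi

lemma avgOn_eq_self_of_forall_eq {c : ℝ} (h : ∀ i ∈ s, x i = c) : avgOn s x = x := by
  funext i
  by_cases hi : i ∈ s
  · rw [avgOn_of_mem hi, expect_congr rfl h, expect_const ⟨i, hi⟩, h i hi]
  · exact avgOn_of_notMem hi

@[simp]
lemma avgOn_avgOn : avgOn s (avgOn s x) = avgOn s x :=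
  avgOn_eq_self_of_forall_eq fun _ hi => avgOn_of_mem hi

lemma avgOn_sub : avgOn s (fun k => x k - z k) i = avgOn s x i - avgOn s z i := by
  by_cases hi : i ∈ s
  · simp only [avgOn_of_mem hi, expect_sub_distrib]
  · simp only [avgOn_of_notMem hi]

lemma avgOn_nonneg (hx : ∀ i, 0 ≤ x i) (i : ι) : 0 ≤ avgOn s x i := by
  by_cases hi : i ∈ s
  · exact (avgOn_of_mem hi).symm ▸ expect_nonneg fun k _ => hx k
  · exact (avgOn_of_notMem hi).symm ▸ hx i

lemma sum_avgOn_of_subset {t : Finset ι} (hst : s ⊆ t) :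
    ∑ i ∈ t, avgOn s x i = ∑ i ∈ t, x i := by
  rw [← sum_sdiff hst, ← sum_sdiff hst (f := x),
    sum_congr rfl fun i hi => avgOn_of_notMem (mem_sdiff.1 hi).2,
    sum_congr rfl fun i hi => avgOn_of_mem hi, sum_const, nsmul_eq_mul, card_mul_expect]

variable [Fintype ι]

lemma sum_avgOn_mul_comm (x z : ι → ℝ) :
    ∑ i, avgOn s x i * z i = ∑ i, x i * avgOn s z i := by
  rw [← sum_add_sum_compl s, ← sum_add_sum_compl s fun i => x i * avgOn s z i]
  congr 1
  · rw [sum_congr rfl fun i hi => congrArg (· * z i) (avgOn_of_mem (x := x) hi),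
      sum_congr rfl fun i hi => congrArg (x i * ·) (avgOn_of_mem (x := z) hi),
      ← sum_mul, ← mul_sum, ← card_mul_expect s x, ← card_mul_expect s z]
    ring
  · exact sum_congr rfl fun i hi => by
      rw [avgOn_of_notMem (mem_compl.1 hi), avgOn_of_notMem (mem_compl.1 hi)]

lemma sum_avgOn_mul_of_avgOn_eq (hz : avgOn s z = z) :
    ∑ i, avgOn s x i * z i = ∑ i, x i * z i := by
  rw [sum_avgOn_mul_comm, hz]

lemma sum_sq_eq_sum_sq_avgOn_add :
    ∑ i, x i ^ 2 = ∑ i, avgOn s x i ^ 2 + ∑ i, (x i - avgOn s x i) ^ 2 := by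
  have hcross : ∑ i, avgOn s x i * avgOn s x i = ∑ i, x i * avgOn s x i :=
    sum_avgOn_mul_of_avgOn_eq avgOn_avgOn
  have hexpand : ∑ i, (x i - avgOn s x i) ^ 2 =
      ∑ i, (x i ^ 2 - 2 * (x i * avgOn s x i) + avgOn s x i * avgOn s x i) :=
    sum_congr rfl fun _ _ => by ring
  rw [hexpand, sum_add_distrib, sum_sub_distrib, ← mul_sum, ← hcross]
  simp only [sq]
  ring

lemma sum_avgOn_mul_le (h : MonovaryOn x z s) :
    ∑ i, avgOn s x i * z i ≤ ∑ i, x i * z i := by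
  rw [← sum_add_sum_compl s, ← sum_add_sum_compl s fun i => x i * z i]
  gcongr ?_ + ?_
  · rcases s.eq_empty_or_nonempty with rfl | hs
    · simp
    rw [sum_congr rfl fun i hi => congrArg (· * z i) (avgOn_of_mem hi), ← mul_sum,
      ← mul_le_mul_iff_right₀ (show (0 : ℝ) < #s by exact_mod_cast hs.card_pos),
      ← mul_assoc, card_mul_expect]
    exact h.sum_mul_sum_le_card_mul_sum
  · exact le_of_eq <| sum_congr rfl fun i hi => by rw [avgOn_of_notMem (mem_compl.1 hi)]

end Projection

section Segment

variable [LinearOrder ι] {j k l : ι} {g x : ι → ℝ}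

lemma Antitone.avgOn_Icc [LocallyFiniteOrder ι] (hx : Antitone x) :
    Antitone (avgOn (Icc j l) x) := by
  intro a b hab
  by_cases ha : a ∈ Icc j l <;> by_cases hb : b ∈ Icc j l
  · rw [avgOn_of_mem ha, avgOn_of_mem hb]
  · have hlb : l < b := lt_of_not_ge fun h => hb (mem_Icc.2 ⟨(mem_Icc.1 ha).1.trans hab, h⟩)
    rw [avgOn_of_mem ha, avgOn_of_notMem hb]
    exact le_expect ⟨a, ha⟩ fun i hi => hx ((mem_Icc.1 hi).2.trans hlb.le)
  · have haj : a < j := lt_of_not_ge fun h => ha (mem_Icc.2 ⟨h, hab.trans (mem_Icc.1 hb).2⟩)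
    rw [avgOn_of_notMem ha, avgOn_of_mem hb]
    exact expect_le ⟨b, hb⟩ fun i hi => hx (haj.le.trans (mem_Icc.1 hi).1)
  · rw [avgOn_of_notMem ha, avgOn_of_notMem hb]
    exact hx hab

lemma sum_Icc_nonpos_of_monotoneOn [LocallyFiniteOrder ι] {h : ι → ℝ}
    (hmono : MonotoneOn h (Set.Icc j l))
    (hsum : ∑ i ∈ Icc j l, h i = 0) (hkl : k ≤ l) : ∑ i ∈ Icc j k, h i ≤ 0 := by
  rcases lt_or_ge k j with hkj | hjk
  · simp [Icc_eq_empty_of_lt hkj]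
  have hk : k ∈ Set.Icc j l := ⟨hjk, hkl⟩
  rcases le_or_gt (h k) 0 with hneg | hpos
  · exact sum_nonpos fun i hi => (hmono ⟨(mem_Icc.1 hi).1, (mem_Icc.1 hi).2.trans hkl⟩ hk
      (mem_Icc.1 hi).2).trans hneg
  · -- otherwise every later term exceeds `h k > 0`, and the terms of the segment sum to zero
    have hrest : 0 ≤ ∑ i ∈ Ioc k l, h i := sum_nonneg fun i hi =>
      hpos.le.trans (hmono hk ⟨hjk.trans (mem_Ioc.1 hi).1.le, (mem_Ioc.1 hi).2⟩ (mem_Ioc.1 hi).1.le)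
    have hunion : Icc j k ∪ Ioc k l = Icc j l := by
      rw [← coe_inj, coe_union, coe_Icc, coe_Ioc, coe_Icc, Set.Icc_union_Ioc_eq_Icc hjk hkl]
    rw [← hunion, sum_union (disjoint_left.2 fun _ hi hi' =>
      (mem_Icc.1 hi).2.not_gt (mem_Ioc.1 hi').1)] at hsum
    linarith

lemma sum_Iio_le_of_forall_sum_Iic_le [LocallyFiniteOrderBot ι]
    (h : ∀ k, ∑ i ∈ Iic k, g i ≤ ∑ i ∈ Iic k, x i) (j : ι) :
    ∑ i ∈ Iio j, g i ≤ ∑ i ∈ Iio j, x i := by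
  rcases (Iio j).eq_empty_or_nonempty with hempty | hne
  · simp [hempty]
  have hIio : Iio j = Iic ((Iio j).max' hne) := by
    ext i
    refine ⟨fun hi => mem_Iic.2 (le_max' _ _ hi), fun hi => ?_⟩
    exact mem_Iio.2 ((mem_Iic.1 hi).trans_lt (mem_Iio.1 (max'_mem _ hne)))
  rw [hIio]
  exact h _

variable [LocallyFiniteOrder ι] [LocallyFiniteOrderBot ι]

lemma sum_Iic_eq_sum_Iio_add_sum_Icc (hjk : j ≤ k) (f : ι → ℝ) :
    ∑ i ∈ Iic k, f i = ∑ i ∈ Iio j, f i + ∑ i ∈ Icc j k, f i := by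
  have hunion : Iio j ∪ Icc j k = Iic k := by
    rw [← coe_inj, coe_union, coe_Iio, coe_Icc, coe_Iic, Set.Iio_union_Icc_eq_Iic hjk]
  rw [← hunion, sum_union (disjoint_left.2 fun _ hi hi' => (mem_Iio.1 hi).not_ge (mem_Icc.1 hi').1)]

lemma sum_Iic_avgOn_Icc_of_lt (hkj : k < j) :
    ∑ i ∈ Iic k, avgOn (Icc j l) x i = ∑ i ∈ Iic k, x i :=
  sum_congr rfl fun _ hi => avgOn_of_notMem fun hi' =>
    (mem_Icc.1 hi').1.not_gt ((mem_Iic.1 hi).trans_lt hkj)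

lemma sum_Iic_avgOn_Icc_of_le (hlk : l ≤ k) :
    ∑ i ∈ Iic k, avgOn (Icc j l) x i = ∑ i ∈ Iic k, x i :=
  sum_avgOn_of_subset fun _ hi => mem_Iic.2 ((mem_Icc.1 hi).2.trans hlk)

lemma sum_Iic_avgOn_Icc (hjk : j ≤ k) (hkl : k ≤ l) :
    ∑ i ∈ Iic k, avgOn (Icc j l) x i = ∑ i ∈ Iio j, x i + #(Icc j k) * 𝔼 i ∈ Icc j l, x i := by
  rw [sum_Iic_eq_sum_Iio_add_sum_Icc hjk,
    sum_congr rfl fun i hi => avgOn_of_notMem fun hi' => (mem_Iio.1 hi).not_ge (mem_Icc.1 hi').1,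
    sum_congr rfl fun i hi => avgOn_of_mem (Icc_subset_Icc_right hkl hi), sum_const, nsmul_eq_mul]

lemma sum_Iic_avgOn_Icc_le (h : ∀ k, ∑ i ∈ Iic k, g i ≤ ∑ i ∈ Iic k, x i) (k : ι) :
    ∑ i ∈ Iic k, avgOn (Icc j l) g i ≤ ∑ i ∈ Iic k, avgOn (Icc j l) x i := by
  rcases lt_or_ge k j with hkj | hjk
  · rw [sum_Iic_avgOn_Icc_of_lt hkj, sum_Iic_avgOn_Icc_of_lt hkj]
    exact h k
  rcases le_or_gt l k with hlk | hkl
  · rw [sum_Iic_avgOn_Icc_of_le hlk, sum_Iic_avgOn_Icc_of_le hlk]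
    exact h k
  rw [sum_Iic_avgOn_Icc hjk hkl.le, sum_Iic_avgOn_Icc hjk hkl.le]
  -- the middle prefix sums interpolate between the constraints just before `j` and at `l`
  have hbefore := sum_Iio_le_of_forall_sum_Iic_le h j
  have hend := h l
  rw [sum_Iic_eq_sum_Iio_add_sum_Icc (hjk.trans hkl.le), sum_Iic_eq_sum_Iio_add_sum_Icc
    (hjk.trans hkl.le), ← card_mul_expect (Icc j l) g,
    ← card_mul_expect (Icc j l) x] at hend
  have hcard : (#(Icc j k) : ℝ) ≤ #(Icc j l) :=
    mod_cast card_le_card (Icc_subset_Icc_right hkl.le)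
  rcases le_total (𝔼 i ∈ Icc j l, g i) (𝔼 i ∈ Icc j l, x i) with hmean | hmean <;> nlinarith

lemma sum_Iic_le_sum_Iic_avgOn_Icc (hg : MonotoneOn g (Set.Icc j l)) (k : ι) :
    ∑ i ∈ Iic k, g i ≤ ∑ i ∈ Iic k, avgOn (Icc j l) g i := by
  rcases lt_or_ge k j with hkj | hjk
  · exact (sum_Iic_avgOn_Icc_of_lt hkj).ge
  rcases le_or_gt l k with hlk | hkl
  · exact (sum_Iic_avgOn_Icc_of_le hlk).ge
  have hcentered := sum_Icc_nonpos_of_monotoneOn (h := fun i => g i - 𝔼 i ∈ Icc j l, g i)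
    (fun a ha b hb hab => sub_le_sub_right (hg ha hb hab) _)
    (by rw [sum_sub_distrib, sum_const, nsmul_eq_mul, card_mul_expect, sub_self]) hkl.le (k := k)
  rw [sum_sub_distrib, sum_const, nsmul_eq_mul, sub_nonpos] at hcentered
  rw [sum_Iic_avgOn_Icc hjk hkl.le, sum_Iic_eq_sum_Iio_add_sum_Icc hjk]
  linarith

end Segment

section LP

variable {p : ℕ} {y lam w u : Fin p → ℝ} {j l : Fin p} {μ : ℝ}

lemma avgMod_eq_avgOn (x : Fin p → ℝ) (j l : Fin p) : avgMod x j l = avgOn (Icc j l) x := by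
  funext i
  simp only [avgMod, avgOn, expect_eq_sum_div_card]

lemma LPFeas.avgOn_Icc (h : LPFeas y lam w) :
    LPFeas (avgOn (Icc j l) y) (avgOn (Icc j l) lam) (avgOn (Icc j l) w) :=
  ⟨fun k => by simpa only [avgOn_sub] using sum_Iic_avgOn_Icc_le h.1 k, h.2.1.avgOn_Icc,
    avgOn_nonneg h.2.2⟩

lemma LPFeas.of_avgOn_Icc (h : LPFeas (avgOn (Icc j l) y) (avgOn (Icc j l) lam) w)
    (hmono : MonotoneOn (fun i => y i - lam i) (Set.Icc j l)) : LPFeas y lam w :=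
  ⟨fun k => (sum_Iic_le_sum_Iic_avgOn_Icc hmono k).trans (by simpa only [avgOn_sub] using h.1 k),
    h.2⟩

variable {s : Finset (Fin p)}

lemma fmu_avgOn_add_le (h : MonovaryOn lam w s) :
    fmu lam μ (avgOn s w) + μ / 2 * ∑ i, (w i - avgOn s w i) ^ 2 ≤ fmu lam μ w := by
  have hlin : ∑ i, lam i * avgOn s w i ≤ ∑ i, lam i * w i :=
    (sum_avgOn_mul_comm lam w).symm.trans_le (sum_avgOn_mul_le h)
  unfold fmu
  rw [sum_sq_eq_sum_sq_avgOn_add (s := s) (x := w)]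
  linarith

lemma avgOn_eq_self_of_fmu_le (hμ : 0 < μ) (h : MonovaryOn lam w s)
    (hle : fmu lam μ w ≤ fmu lam μ (avgOn s w)) : avgOn s w = w := by
  have hsq : ∑ i, (w i - avgOn s w i) ^ 2 = 0 := by
    have hdecrease := fmu_avgOn_add_le (μ := μ) h
    have hnn : 0 ≤ ∑ i, (w i - avgOn s w i) ^ 2 := sum_nonneg fun _ _ => sq_nonneg _
    nlinarith
  funext i
  have hi := (sum_eq_zero_iff_of_nonneg fun _ _ => sq_nonneg _).1 hsq i (mem_univ i)
  exact (sub_eq_zero.1 (pow_eq_zero_iff two_ne_zero |>.1 hi)).symm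

lemma fmu_avgOn_of_avgOn_eq (hw : avgOn s w = w) : fmu (avgOn s lam) μ w = fmu lam μ w := by
  unfold fmu
  rw [sum_avgOn_mul_of_avgOn_eq hw]

lemma fmu_avgOn_le (hμ : 0 ≤ μ) (hlam : avgOn s lam = lam) :
    fmu lam μ (avgOn s u) ≤ fmu lam μ u := by
  have hsq : ∑ i, avgOn s u i ^ 2 ≤ ∑ i, u i ^ 2 := by
    rw [sum_sq_eq_sum_sq_avgOn_add (s := s) (x := u), le_add_iff_nonneg_right]
    exact sum_nonneg fun _ _ => sq_nonneg _
  unfold fmu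
  rw [← sum_avgOn_mul_comm, hlam]
  gcongr

end LP

theorem lp_perturbed_averaging_general {p : ℕ} (lam : Fin p → ℝ)
    (hlam : Antitone lam)
    (y : Fin p → ℝ)
    (μ : ℝ) (hμ : 0 < μ)
    (wstar : Fin p → ℝ)
    (hfeas : LPFeas y lam wstar)
    (hopt : ∀ u : Fin p → ℝ, LPFeas y lam u → fmu lam μ wstar ≤ fmu lam μ u)
    (j l : Fin p) (hjl : j < l)
    (hchain : ∀ i₁ i₂ : Fin p, j ≤ i₁ → i₁ ≤ i₂ → i₂ ≤ l →
      y i₁ - lam i₁ ≤ y i₂ - lam i₂) :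
    -- (i) the solution is constant on the segment
    (∀ i ∈ Finset.Icc j l, wstar i = wstar j) ∧
    -- (ii) w* also solves the perturbed problem with averaged data
    LPFeas (avgMod y j l) (avgMod lam j l) wstar ∧
    (∀ u : Fin p → ℝ, LPFeas (avgMod y j l) (avgMod lam j l) u →
      fmu (avgMod lam j l) μ wstar ≤ fmu (avgMod lam j l) μ u) := by
  have hmono : MonotoneOn (fun i => y i - lam i) (Set.Icc j l) :=
    fun a ha b hb hab => hchain a b ha.1 hab hb.2
  have hfix : avgOn (Icc j l) wstar = wstar :=
    avgOn_eq_self_of_fmu_le hμ ((hlam.monovary hfeas.2.1).monovaryOn _)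
      (hopt _ (hfeas.avgOn_Icc.of_avgOn_Icc hmono))
  simp only [avgMod_eq_avgOn]
  refine ⟨fun i hi => ?_, hfix ▸ hfeas.avgOn_Icc, fun u hu => ?_⟩
  · rw [← hfix, avgOn_of_mem hi, avgOn_of_mem (left_mem_Icc.2 hjl.le)]
  have hubar : LPFeas (avgOn (Icc j l) y) (avgOn (Icc j l) lam) (avgOn (Icc j l) u) := by
    simpa only [avgOn_avgOn] using hu.avgOn_Icc (j := j) (l := l)
  calc fmu (avgOn (Icc j l) lam) μ wstar = fmu lam μ wstar := fmu_avgOn_of_avgOn_eq hfix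
    _ ≤ fmu lam μ (avgOn (Icc j l) u) := hopt _ (hubar.of_avgOn_Icc hmono)
    _ = fmu (avgOn (Icc j l) lam) μ (avgOn (Icc j l) u) :=
      (fmu_avgOn_of_avgOn_eq avgOn_avgOn).symm
    _ ≤ fmu (avgOn (Icc j l) lam) μ u := fmu_avgOn_le hμ.le avgOn_avgOn

/-- on a segment where `y_i − λ_i` is nondecreasing, the minimizer of
the perturbed problem is constant, and it also minimizes the problem with `y, λ`
averaged over the segment. -/
theorem lp_perturbed_averaging {p : ℕ} (lam : Fin p → ℝ)
    (hlam : Antitone lam) (hlamnn : ∀ i, 0 ≤ lam i)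
    (y : Fin p → ℝ) (hy : Antitone y) (hynn : ∀ i, 0 ≤ y i)
    (μ : ℝ) (hμ : 0 < μ)
    (wstar : Fin p → ℝ)
    (hfeas : LPFeas y lam wstar)
    (hopt : ∀ u : Fin p → ℝ, LPFeas y lam u → fmu lam μ wstar ≤ fmu lam μ u)
    (j l : Fin p) (hjl : j < l)
    (hchain : ∀ i₁ i₂ : Fin p, j ≤ i₁ → i₁ ≤ i₂ → i₂ ≤ l →
      y i₁ - lam i₁ ≤ y i₂ - lam i₂) :
    -- (i) the solution is constant on the segment
    (∀ i ∈ Finset.Icc j l, wstar i = wstar j) ∧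
    -- (ii) w* also solves the perturbed problem with averaged data
    LPFeas (avgMod y j l) (avgMod lam j l) wstar ∧
    (∀ u : Fin p → ℝ, LPFeas (avgMod y j l) (avgMod lam j l) u →
      fmu (avgMod lam j l) μ wstar ≤ fmu (avgMod lam j l) μ u) :=
  lp_perturbed_averaging_general lam hlam y μ hμ wstar hfeas hopt j l hjl hchain
end
end

section
/- Let λ_1 ≥ … ≥ λ_p ≥ 0, y_1 ≥ … ≥ y_p ≥ 0, and μ > 0, and suppose additionally that y_1 − λ_1 ≥ y_2 − λ_2 ≥ … ≥ y_p − λ_p. Then the vector w* with components w*_i = max(y_i − λ_i, 0) is the unique minimizer of f_μ(w) = Σ_{i=1}^p λ_i w_i + (μ/2)‖w‖² over the feasible set { w : Σ_{i=1}^k (y_i − λ_i) ≤ Σ_{i=1}^k w_i for k = 1,…,p, and w_1 ≥ … ≥ w_p ≥ 0 }. -/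
noncomputable section

lemma sum_Iic_eq_range {p : ℕ} (f : Fin p → ℝ) (k : Fin p) :
    ∑ i ∈ Finset.Iic k, f i = ∑ j ∈ Finset.range (k.val + 1), extz f j := by
  have h1 : Finset.range (k.val + 1) = Finset.Iic (k.val) := by
    ext j; simp [Nat.lt_succ_iff]
  rw [h1, ← Fin.map_valEmbedding_Iic, Finset.sum_map]
  apply Finset.sum_congr rfl
  intro i _
  simp [extz, i.isLt]

lemma abel_aux (C D : ℕ → ℝ) (hCa : ∀ i, C (i + 1) ≤ C i)
    (hD : ∀ k, 0 ≤ ∑ j ∈ Finset.range (k + 1), D j) :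
    ∀ n, C n * ∑ j ∈ Finset.range n, D j ≤ ∑ j ∈ Finset.range n, C j * D j := by
  intro n
  induction n with
  | zero => simp
  | succ n ih =>
    rw [Finset.sum_range_succ, Finset.sum_range_succ]
    have e : ∑ j ∈ Finset.range (n + 1), D j = ∑ j ∈ Finset.range n, D j + D n :=
      Finset.sum_range_succ D n
    have h1 : C (n + 1) * (∑ j ∈ Finset.range n, D j + D n)
        ≤ C n * (∑ j ∈ Finset.range n, D j + D n) := by
      rw [← e]; exact mul_le_mul_of_nonneg_right (hCa n) (hD n)
    nlinarith [h1, ih]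

lemma abel_nonneg (C D : ℕ → ℝ) (hC0 : ∀ i, 0 ≤ C i) (hCa : ∀ i, C (i + 1) ≤ C i)
    (hD : ∀ k, 0 ≤ ∑ j ∈ Finset.range (k + 1), D j) (n : ℕ) :
    0 ≤ ∑ j ∈ Finset.range n, C j * D j := by
  refine le_trans ?_ (abel_aux C D hCa hD n)
  cases n with
  | zero => simp
  | succ m => exact mul_nonneg (hC0 _) (hD m)

lemma key_psum {p : ℕ} (d u : Fin p → ℝ) (hd : Antitone d) (hu : ∀ i, 0 ≤ u i)
    (hc : ∀ k : Fin p, ∑ i ∈ Finset.Iic k, d i ≤ ∑ i ∈ Finset.Iic k, u i) (k : Fin p) :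
    ∑ i ∈ Finset.Iic k, max (d i) 0 ≤ ∑ i ∈ Finset.Iic k, u i := by
  set S := (Finset.Iic k).filter (fun i => 0 ≤ d i) with hSdef
  have hsum : ∑ i ∈ Finset.Iic k, max (d i) 0 = ∑ i ∈ S, d i := by
    rw [hSdef, Finset.sum_filter]
    apply Finset.sum_congr rfl
    intro i _
    rcases le_or_gt 0 (d i) with h | h
    · simp [h, max_eq_left h]
    · simp [not_le.mpr h, max_eq_right h.le]
  rw [hsum]
  rcases S.eq_empty_or_nonempty with hS | hS
  · rw [hS, Finset.sum_empty]
    exact Finset.sum_nonneg fun i _ => hu i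
  · set m := S.max' hS with hm
    have hmS : m ∈ S := S.max'_mem hS
    have hmk : m ≤ k := Finset.mem_Iic.mp (Finset.mem_filter.mp hmS).1
    have hdm : 0 ≤ d m := (Finset.mem_filter.mp hmS).2
    have hSeq : S = Finset.Iic m := by
      ext i
      constructor
      · intro hi; exact Finset.mem_Iic.mpr (S.le_max' i hi)
      · intro hi
        have him : i ≤ m := Finset.mem_Iic.mp hi
        exact Finset.mem_filter.mpr
          ⟨Finset.mem_Iic.mpr (le_trans him hmk), le_trans hdm (hd him)⟩
    rw [hSeq]
    calc ∑ i ∈ Finset.Iic m, d i ≤ ∑ i ∈ Finset.Iic m, u i := hc m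
      _ ≤ ∑ i ∈ Finset.Iic k, u i :=
        Finset.sum_le_sum_of_subset_of_nonneg (Finset.Iic_subset_Iic.mpr hmk)
          (fun i _ _ => hu i)

lemma psum_nonneg_ext {p : ℕ} (v : Fin p → ℝ)
    (hv : ∀ k : Fin p, 0 ≤ ∑ i ∈ Finset.Iic k, v i) (n : ℕ) :
    0 ≤ ∑ j ∈ Finset.range n, extz v j := by
  have htrunc : ∑ j ∈ Finset.range n, extz v j
      = ∑ j ∈ Finset.range (min n p), extz v j := by
    symm
    apply Finset.sum_subset (Finset.range_subset_range.mpr (min_le_left n p))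
    intro x hx hnx
    have hx1 : x < n := Finset.mem_range.mp hx
    have hx2 : ¬ x < min n p := fun h => hnx (Finset.mem_range.mpr h)
    have : ¬ x < p := by omega
    simp [extz, this]
  rw [htrunc]
  rcases Nat.eq_zero_or_pos (min n p) with h0 | hpos
  · rw [h0]; simp
  · obtain ⟨s, hs⟩ : ∃ s, min n p = s + 1 := ⟨min n p - 1, by omega⟩
    have hsp : s < p := by omega
    rw [hs]
    have h := hv ⟨s, hsp⟩
    rwa [sum_Iic_eq_range] at h

lemma sum_mul_nonneg {p : ℕ} (c v : Fin p → ℝ) (hc0 : ∀ i, 0 ≤ c i) (hca : Antitone c)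
    (hv : ∀ k : Fin p, 0 ≤ ∑ i ∈ Finset.Iic k, v i) : 0 ≤ ∑ i, c i * v i := by
  have h1 : ∑ i, c i * v i = ∑ j ∈ Finset.range p, extz c j * extz v j := by
    rw [← Fin.sum_univ_eq_sum_range (fun j => extz c j * extz v j) p]
    apply Finset.sum_congr rfl
    intro i _
    simp [extz, i.isLt]
  rw [h1]
  apply abel_nonneg
  · intro i
    unfold extz
    split
    · exact hc0 _
    · exact le_rfl
  · intro i
    by_cases h1 : i + 1 < p
    · have h2 : i < p := by omega
      simp only [extz, dif_pos h1, dif_pos h2]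
      exact hca (Fin.mk_le_mk.mpr (Nat.le_succ i))
    · by_cases h2 : i < p
      · simp only [extz, dif_neg h1, dif_pos h2]
        exact hc0 _
      · simp only [extz, dif_neg h1, dif_neg h2]
        exact le_rfl
  · intro k
    exact psum_nonneg_ext v hv (k + 1)

/-- when `y − λ` is nonincreasing, the soft-thresholded vector
`w*_i = max (y_i − λ_i) 0` is the unique minimizer of the perturbed problem. -/
theorem lp_perturbed_solution {p : ℕ} (lam : Fin p → ℝ)
    (hlam : Antitone lam) (hlamnn : ∀ i, 0 ≤ lam i)
    (y : Fin p → ℝ) (hy : Antitone y) (hynn : ∀ i, 0 ≤ y i)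
    (μ : ℝ) (hμ : 0 < μ)
    (hdiff : Antitone (fun i => y i - lam i)) :
    LPFeas y lam (fun i => max (y i - lam i) 0) ∧
    (∀ u : Fin p → ℝ, LPFeas y lam u →
      fmu lam μ (fun i => max (y i - lam i) 0) ≤ fmu lam μ u) ∧
    (∀ u : Fin p → ℝ, LPFeas y lam u →
      (∀ z : Fin p → ℝ, LPFeas y lam z → fmu lam μ u ≤ fmu lam μ z) →
      u = fun i => max (y i - lam i) 0) := by
  set w : Fin p → ℝ := fun i => max (y i - lam i) 0 with hw
  have hwa : Antitone w := fun a b hab => max_le_max (hdiff hab) le_rfl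
  have hwnn : ∀ i, 0 ≤ w i := fun i => le_max_right _ _
  have hfeas : LPFeas y lam w := by
    refine ⟨fun k => Finset.sum_le_sum fun i _ => le_max_left _ _, hwa, hwnn⟩
  -- key facts for any feasible u
  have hkey : ∀ u : Fin p → ℝ, LPFeas y lam u →
      (0 ≤ ∑ i, lam i * (u i - w i)) ∧ (0 ≤ ∑ i, w i * (u i - w i)) := by
    intro u hu
    obtain ⟨huc, hua, hunn⟩ := hu
    have hps : ∀ k : Fin p, ∑ i ∈ Finset.Iic k, w i ≤ ∑ i ∈ Finset.Iic k, u i :=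
      key_psum (fun i => y i - lam i) u hdiff hunn huc
    have hv : ∀ k : Fin p, 0 ≤ ∑ i ∈ Finset.Iic k, (u i - w i) := by
      intro k
      rw [Finset.sum_sub_distrib]
      exact sub_nonneg.mpr (hps k)
    exact ⟨sum_mul_nonneg lam _ hlamnn hlam hv, sum_mul_nonneg w _ hwnn hwa hv⟩
  have hident : ∀ u : Fin p → ℝ,
      fmu lam μ u - fmu lam μ w = (∑ i, lam i * (u i - w i))
        + μ * (∑ i, w i * (u i - w i)) + μ / 2 * (∑ i, (u i - w i) ^ 2) := by
    intro u
    have e1 : fmu lam μ u = ∑ i, (lam i * u i + μ / 2 * u i ^ 2) := by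
      unfold fmu; rw [Finset.mul_sum, Finset.sum_add_distrib]
    have e2 : fmu lam μ w = ∑ i, (lam i * w i + μ / 2 * w i ^ 2) := by
      unfold fmu; rw [Finset.mul_sum, Finset.sum_add_distrib]
    rw [e1, e2, ← Finset.sum_sub_distrib, Finset.mul_sum, Finset.mul_sum,
      ← Finset.sum_add_distrib, ← Finset.sum_add_distrib]
    exact Finset.sum_congr rfl fun i _ => by ring
  refine ⟨hfeas, ?_, ?_⟩
  · intro u hu
    obtain ⟨h1, h2⟩ := hkey u hu
    have h3 : 0 ≤ ∑ i, (u i - w i) ^ 2 :=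
      Finset.sum_nonneg fun i _ => sq_nonneg _
    nlinarith [hident u]
  · intro u hu hmin
    obtain ⟨h1, h2⟩ := hkey u hu
    have h3 : 0 ≤ ∑ i, (u i - w i) ^ 2 :=
      Finset.sum_nonneg fun i _ => sq_nonneg _
    have h4 : fmu lam μ u ≤ fmu lam μ w := hmin w hfeas
    have h5 : ∑ i, (u i - w i) ^ 2 = 0 := by
      have := hident u
      nlinarith
    funext i
    have h6 := (Finset.sum_eq_zero_iff_of_nonneg
      (fun i _ => sq_nonneg (u i - w i))).mp h5 i (Finset.mem_univ i)
    have h7 : u i - w i = 0 := by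
      have := sq_eq_zero_iff.mp h6
      exact this
    exact sub_eq_zero.mp h7
end
end
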